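/- arXiv:2103.08665 — 3 statements merged into one kernel-verified Lean document; each statement's English description precedes it below -/
import Mathlib

section
/- For any finite point set P in R^d and any two points p, q in P with td_P(p) ≤ td_P(q), removing q does not change the depth of p: td_P(p) = td_{P\{q}}(p). -/
open scoped RealInnerProductSpace Classical

/-- The Tukey depth of a point `p` with respect to a finite point set `P` in `ℝ^d`:
the minimum number of points of `P` contained in a closed halfspace containing `p`. -/
noncomputable def tukeyDepth {d : ℕ} (P : Finset (EuclideanSpace ℝ (Fin d)))
    (p : EuclideanSpace ℝ (Fin d)) : ℕ :=
  sInf {n : ℕ | ∃ v : EuclideanSpace ℝ (Fin d), v ≠ 0 ∧ ∃ c : ℝ,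
    ⟪v, p⟫ ≤ c ∧ (P.filter fun x => ⟪v, x⟫ ≤ c).card = n}

/-- A finite point set in `ℝ^d` is in general position if no `d+1` of its points lie
on a common hyperplane, i.e. every `(d+1)`-subset is affinely independent. -/
def GenPos {d : ℕ} (P : Finset (EuclideanSpace ℝ (Fin d))) : Prop :=
  ∀ S : Finset (EuclideanSpace ℝ (Fin d)), S ⊆ P → S.card = d + 1 →
    AffineIndependent ℝ (fun x : {x // x ∈ S} => (x : EuclideanSpace ℝ (Fin d)))


theorem depth_erase_of_le {d : ℕ} (P : Finset (EuclideanSpace ℝ (Fin d)))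
    (hP : GenPos P) (p q : EuclideanSpace ℝ (Fin d)) (hp : p ∈ P) (hq : q ∈ P)
    (hpq : p ≠ q) (h : tukeyDepth P p ≤ tukeyDepth P q) :
    tukeyDepth (P.erase q) p = tukeyDepth P p := by
  classical
  have hv0 : (p - q : EuclideanSpace ℝ (Fin d)) ≠ 0 := sub_ne_zero.mpr hpq
  have hmem : ∀ (Q : Finset (EuclideanSpace ℝ (Fin d))) (r : EuclideanSpace ℝ (Fin d))
      (v : EuclideanSpace ℝ (Fin d)), v ≠ 0 → ∀ (c : ℝ), ⟪v, r⟫ ≤ c →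
      tukeyDepth Q r ≤ (Q.filter fun x => ⟪v, x⟫ ≤ c).card := by
    intro Q r v hv c hc
    exact Nat.sInf_le ⟨v, hv, c, hc, rfl⟩
  have hnonempty : ∀ (Q : Finset (EuclideanSpace ℝ (Fin d))) (r : EuclideanSpace ℝ (Fin d)),
      {n : ℕ | ∃ v : EuclideanSpace ℝ (Fin d), v ≠ 0 ∧ ∃ c : ℝ,
        ⟪v, r⟫ ≤ c ∧ (Q.filter fun x => ⟪v, x⟫ ≤ c).card = n}.Nonempty :=
    fun Q r => ⟨_, p - q, hv0, ⟪p - q, r⟫, le_refl _, rfl⟩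
  have hle : tukeyDepth (P.erase q) p ≤ tukeyDepth P p := by
    obtain ⟨v, hv, c, hc, hcard⟩ := Nat.sInf_mem (hnonempty P p)
    calc tukeyDepth (P.erase q) p ≤ ((P.erase q).filter fun x => ⟪v, x⟫ ≤ c).card :=
          hmem _ _ v hv c hc
      _ ≤ (P.filter fun x => ⟪v, x⟫ ≤ c).card :=
          Finset.card_le_card (Finset.filter_subset_filter _ (P.erase_subset q))
      _ = tukeyDepth P p := hcard
  refine le_antisymm hle ?_
  by_contra hlt
  push_neg at hlt
  obtain ⟨v, hv, c, hc, hcard⟩ := Nat.sInf_mem (hnonempty (P.erase q) p)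
  set k := tukeyDepth (P.erase q) p with hk
  set m := tukeyDepth P p with hm
  set F := P.filter (fun x => ⟪v, x⟫ ≤ ⟪v, p⟫) with hF
  have hmF : m ≤ F.card := hmem P p v hv _ (le_refl _)
  have hFe : (F.erase q).card ≤ k := by
    have hsub0 : F.erase q ⊆ (P.erase q).filter fun x => ⟪v, x⟫ ≤ c := by
      intro x hx
      simp only [hF, Finset.mem_erase, Finset.mem_filter] at hx ⊢
      exact ⟨⟨hx.1, hx.2.1⟩, hx.2.2.trans hc⟩
    calc (F.erase q).card ≤ ((P.erase q).filter fun x => ⟪v, x⟫ ≤ c).card :=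
          Finset.card_le_card hsub0
      _ = k := hcard
  have hcF : F.card ≤ k + 1 := by
    have := Finset.pred_card_le_card_erase (s := F) (a := q)
    omega
  have hqF : q ∈ F := by
    by_contra hqF
    rw [Finset.erase_eq_of_notMem hqF] at hFe
    omega
  have hpF : p ∈ F := Finset.mem_filter.mpr ⟨hp, le_refl _⟩
  have hFcard : F.card = k + 1 := by omega
  have hmk : m = k + 1 := by omega
  have hqv : ⟪v, q⟫ ≤ ⟪v, p⟫ := (Finset.mem_filter.mp hqF).2
  by_cases hcase : ∃ x₀ ∈ F, x₀ ≠ p ∧ ⟪v, x₀⟫ = ⟪v, p⟫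
  · -- Case A: another point of F on the boundary; perturb the normal to exclude it.
    obtain ⟨x₀, hx₀F, hx₀p, hx₀v⟩ := hcase
    set w := (x₀ - p : EuclideanSpace ℝ (Fin d)) with hw
    have hwne : w ≠ 0 := sub_ne_zero.mpr hx₀p
    set E := P.filter (fun x => ⟪v, p⟫ < ⟪v, x⟫) with hE
    obtain ⟨ε, hε, hεE⟩ : ∃ ε : ℝ, 0 < ε ∧
        ∀ x ∈ E, 0 < (⟪v, x⟫ - ⟪v, p⟫) + ε * (⟪w, x⟫ - ⟪w, p⟫) := by
      set T : Finset ℝ :=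
        insert 1 (E.image fun x => (⟪v, x⟫ - ⟪v, p⟫) / (1 + |⟪w, x⟫ - ⟪w, p⟫|)) with hT
      have hTne : T.Nonempty := ⟨1, Finset.mem_insert_self _ _⟩
      refine ⟨T.min' hTne, ?_, ?_⟩
      · rw [Finset.lt_min'_iff]
        intro b hb
        rcases Finset.mem_insert.mp hb with hb | hb
        · exact hb ▸ one_pos
        · obtain ⟨x, hx, rfl⟩ := Finset.mem_image.mp hb
          have hx' : ⟪v, p⟫ < ⟪v, x⟫ := (Finset.mem_filter.mp hx).2
          have : (0:ℝ) < 1 + |⟪w, x⟫ - ⟪w, p⟫| := by positivity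
          exact div_pos (by linarith) this
      · intro x hx
        have hx' : ⟪v, p⟫ < ⟪v, x⟫ := (Finset.mem_filter.mp hx).2
        set A := ⟪w, x⟫ - ⟪w, p⟫ with hA
        set ε := T.min' hTne with hεdef
        have hεpos : 0 < ε := by
          rw [hεdef, Finset.lt_min'_iff]
          intro b hb
          rcases Finset.mem_insert.mp hb with hb | hb
          · exact hb ▸ one_pos
          · obtain ⟨y, hy, rfl⟩ := Finset.mem_image.mp hb
            have hy' : ⟪v, p⟫ < ⟪v, y⟫ := (Finset.mem_filter.mp hy).2
            have : (0:ℝ) < 1 + |⟪w, y⟫ - ⟪w, p⟫| := by positivity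
            exact div_pos (by linarith) this
        have hεle : ε ≤ (⟪v, x⟫ - ⟪v, p⟫) / (1 + |A|) :=
          Finset.min'_le _ _ (Finset.mem_insert_of_mem (Finset.mem_image_of_mem _ hx))
        have hD : (0:ℝ) < 1 + |A| := by positivity
        have h1 : ε * (1 + |A|) ≤ ⟪v, x⟫ - ⟪v, p⟫ := by
          rw [← le_div_iff₀ hD]; exact hεle
        nlinarith [neg_abs_le A, abs_nonneg A]
    set v' := v + ε • w with hv'
    have hinner : ∀ x : EuclideanSpace ℝ (Fin d), ⟪v', x⟫ = ⟪v, x⟫ + ε * ⟪w, x⟫ := by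
      intro x
      rw [hv', inner_add_left, real_inner_smul_left]
    have hx₀out : ⟪v', p⟫ < ⟪v', x₀⟫ := by
      have hww : (0:ℝ) < ⟪w, w⟫ := by
        rw [real_inner_self_eq_norm_sq]
        exact pow_pos (norm_pos_iff.mpr hwne) 2
      have : ⟪w, x₀⟫ - ⟪w, p⟫ = ⟪w, w⟫ := by
        rw [hw, ← inner_sub_right]
      rw [hinner, hinner]
      nlinarith [hx₀v]
    have hv'ne : v' ≠ 0 := by
      intro h0
      rw [h0] at hx₀out
      simp at hx₀out
    have hsub : (P.filter fun x => ⟪v', x⟫ ≤ ⟪v', p⟫) ⊆ F.erase x₀ := by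
      intro x hx
      obtain ⟨hxP, hxv'⟩ := Finset.mem_filter.mp hx
      refine Finset.mem_erase.mpr ⟨?_, ?_⟩
      · rintro rfl; exact absurd hxv' (not_le.mpr hx₀out)
      · by_contra hxF
        have hxE : x ∈ E := by
          refine Finset.mem_filter.mpr ⟨hxP, ?_⟩
          by_contra hle'
          exact hxF (Finset.mem_filter.mpr ⟨hxP, not_lt.mp hle'⟩)
        have := hεE x hxE
        rw [hinner, hinner] at hxv'
        linarith
    have hfinal : m ≤ k := by
      calc m ≤ (P.filter fun x => ⟪v', x⟫ ≤ ⟪v', p⟫).card :=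
            hmem P p v' hv'ne _ (le_refl _)
        _ ≤ (F.erase x₀).card := Finset.card_le_card hsub
        _ = k := by rw [Finset.card_erase_of_mem hx₀F, hFcard]; rfl
    omega
  · -- Case B: all other points of F are strictly inside; shrink to exclude p,
    -- contradicting the depth of q.
    push_neg at hcase
    have hFep : (F.erase p).Nonempty := ⟨q, Finset.mem_erase.mpr ⟨Ne.symm hpq, hqF⟩⟩
    set c₃ := (F.erase p).sup' hFep (fun x => ⟪v, x⟫) with hc₃
    have hc₃lt : c₃ < ⟪v, p⟫ := by
      rw [hc₃, Finset.sup'_lt_iff]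
      intro x hx
      obtain ⟨hxp, hxF⟩ := Finset.mem_erase.mp hx
      have hle' : ⟪v, x⟫ ≤ ⟪v, p⟫ := (Finset.mem_filter.mp hxF).2
      exact lt_of_le_of_ne hle' (hcase x hxF hxp)
    have hqc₃ : ⟪v, q⟫ ≤ c₃ :=
      Finset.le_sup' _ (Finset.mem_erase.mpr ⟨Ne.symm hpq, hqF⟩)
    have hsub : (P.filter fun x => ⟪v, x⟫ ≤ c₃) ⊆ F.erase p := by
      intro x hx
      obtain ⟨hxP, hxv⟩ := Finset.mem_filter.mp hx
      refine Finset.mem_erase.mpr ⟨?_, Finset.mem_filter.mpr ⟨hxP, hxv.trans hc₃lt.le⟩⟩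
      rintro rfl; linarith
    have hq2 : tukeyDepth P q ≤ k := by
      calc tukeyDepth P q ≤ (P.filter fun x => ⟪v, x⟫ ≤ c₃).card :=
            hmem P q v hv c₃ hqc₃
        _ ≤ (F.erase p).card := Finset.card_le_card hsub
        _ = k := by rw [Finset.card_erase_of_mem hpF, hFcard]; rfl
    omega
end

section
/- Let D(n,d,l) denote the number of Tukey depth histograms achievable by n-point sets in general position in R^d whose deepest point has depth exactly l. Then for n ≥ 2l + d - 2, D(n,d,l) = sum_{i=1}^{l} D(n-1,d,i). -/
/-- `numHist n d l` is the number of Tukey depth histograms of `n`-point sets in general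
position in `ℝ^d` whose deepest point has depth exactly `l`.  By the characterization
theorem, these are exactly the vectors `(D 1, …, D l)` of nonnegative integers with
`D l > 0`, total sum `n`, and `D 1 + ⋯ + D (i-1) ≥ 2i + d - 3` for every `2 ≤ i ≤ l`
with `D i > 0`. -/
noncomputable def numHist (n d l : ℕ) : ℕ :=
  Set.ncard {D : ℕ → ℕ |
    (∀ j, j = 0 ∨ l < j → D j = 0) ∧ 0 < D l ∧
    (∑ j ∈ Finset.Icc 1 l, D j) = n ∧
    ∀ i, 2 ≤ i → 0 < D i → 2 * i + d - 3 ≤ ∑ j ∈ Finset.Icc 1 (i - 1), D j}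

/-!
Adding a point at depth `l` is a bijection from histograms of `n - 1` points whose deepest
level is at most `l` onto those of `n` points whose deepest level is exactly `l`. The only
constraint that adding the point can break is the one at level `l`, and when level `l` of the
smaller histogram is empty that constraint reads `n - 1 ≥ 2l + d - 3`, which is the hypothesis
on `n`. Splitting the smaller histograms by their deepest level `i ∈ [1, l]` gives the sum.
-/

open Finset Function

def VanishesOutside (l : ℕ) (D : ℕ → ℕ) : Prop :=
  ∀ j, j = 0 ∨ l < j → D j = 0

def DepthAdmissible (d : ℕ) (D : ℕ → ℕ) : Prop :=
  ∀ i, 2 ≤ i → 0 < D i → 2 * i + d - 3 ≤ ∑ j ∈ Icc 1 (i - 1), D j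

def depthHistograms (n d l : ℕ) : Set (ℕ → ℕ) :=
  {D | VanishesOutside l D ∧ 0 < D l ∧ ∑ j ∈ Icc 1 l, D j = n ∧ DepthAdmissible d D}

/-- Unlike `depthHistograms`, this also contains the zero histogram (when `n = 0`). -/
def depthHistogramsUpTo (n d l : ℕ) : Set (ℕ → ℕ) :=
  {D | VanishesOutside l D ∧ ∑ j ∈ Icc 1 l, D j = n ∧ DepthAdmissible d D}

lemma numHist_eq_ncard (n d l : ℕ) : numHist n d l = (depthHistograms n d l).ncard := rfl

namespace VanishesOutside

variable {i l : ℕ} {D : ℕ → ℕ}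

lemma mono (h : VanishesOutside i D) (hil : i ≤ l) : VanishesOutside l D :=
  fun j hj => h j (by omega)

lemma pred (h : VanishesOutside l D) (hl : D l = 0) : VanishesOutside (l - 1) D := by
  intro j hj
  rcases Nat.lt_or_ge l j with hlj | hjl
  · exact h j (Or.inr hlj)
  · obtain rfl | rfl : j = 0 ∨ j = l := by omega
    exacts [h 0 (Or.inl rfl), hl]

lemma le_of_pos (h : VanishesOutside l D) (hj : 0 < D j) : j ≤ l := by
  by_contra! hlj
  exact hj.ne' (h j (Or.inr hlj))

lemma sum_Icc_eq (h : VanishesOutside i D) (hil : i ≤ l) :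
    ∑ j ∈ Icc 1 l, D j = ∑ j ∈ Icc 1 i, D j := by
  refine (sum_subset (Icc_subset_Icc_right hil) fun j hj hji => h j (Or.inr ?_)).symm
  simp only [mem_Icc] at hj hji
  omega

lemma le_sum (h : VanishesOutside l D) (j : ℕ) : D j ≤ ∑ i ∈ Icc 1 l, D i := by
  by_cases hj : j ∈ Icc 1 l
  · exact single_le_sum (fun _ _ => Nat.zero_le _) hj
  · rw [h j (by simp only [mem_Icc] at hj; omega)]
    exact Nat.zero_le _

end VanishesOutside

lemma finite_depthHistogramsUpTo (n d l : ℕ) : (depthHistogramsUpTo n d l).Finite := by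
  refine (Set.finite_range fun (f : Fin (l + 1) → Fin (n + 1)) (j : ℕ) =>
    if h : j < l + 1 then (f ⟨j, h⟩ : ℕ) else 0).subset ?_
  rintro D ⟨hD, hsum, -⟩
  refine ⟨fun j => ⟨D j, Nat.lt_succ_of_le (hsum ▸ hD.le_sum j)⟩, funext fun j => ?_⟩
  dsimp only
  split_ifs with h
  · rfl
  · exact (hD j (Or.inr (by omega))).symm

lemma depthHistograms_subset_depthHistogramsUpTo (n d l : ℕ) :
    depthHistograms n d l ⊆ depthHistogramsUpTo n d l :=
  fun _ ⟨hD, _, hsum, hadm⟩ => ⟨hD, hsum, hadm⟩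

lemma pairwise_disjoint_depthHistograms (n d : ℕ) :
    Pairwise (Disjoint on depthHistograms n d) := by
  intro i i' hii'
  refine Set.disjoint_left.2 fun D ⟨hD, hpos, _⟩ ⟨hD', hpos', _⟩ => hii' ?_
  exact le_antisymm (hD'.le_of_pos hpos) (hD.le_of_pos hpos')

/-- A nonzero histogram has a deepest level, namely its largest nonempty level. -/
lemma depthHistogramsUpTo_eq_biUnion {n d l : ℕ} (hn : 0 < n) :
    depthHistogramsUpTo n d l = ⋃ i ∈ Icc 1 l, depthHistograms n d i := by
  ext D
  simp only [Set.mem_iUnion, mem_Icc, exists_prop]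
  constructor
  · rintro ⟨hD, hsum, hadm⟩
    obtain ⟨j, hj, hDj⟩ : ∃ j ∈ Icc 1 l, D j ≠ 0 := exists_ne_zero_of_sum_ne_zero (by omega)
    rw [mem_Icc] at hj
    replace hDj : 0 < D j := Nat.pos_of_ne_zero hDj
    set i := Nat.findGreatest (0 < D ·) l
    have hil : i ≤ l := Nat.findGreatest_le l
    have hji : j ≤ i := Nat.le_findGreatest hj.2 hDj
    have hDi : VanishesOutside i D := by
      rintro k (rfl | hik)
      · exact hD 0 (Or.inl rfl)
      · by_contra hk
        exact Nat.findGreatest_is_greatest hik (hD.le_of_pos (Nat.pos_of_ne_zero hk))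
          (Nat.pos_of_ne_zero hk)
    exact ⟨i, ⟨by omega, hil⟩, hDi, Nat.findGreatest_spec (P := (0 < D ·)) hj.2 hDj,
      (hDi.sum_Icc_eq hil).symm.trans hsum, hadm⟩
  · rintro ⟨i, ⟨-, hil⟩, hD, -, hsum, hadm⟩
    exact ⟨hD.mono hil, (hD.sum_Icc_eq hil).trans hsum, hadm⟩

lemma ncard_depthHistogramsUpTo {n d l : ℕ} (hn : 0 < n) :
    (depthHistogramsUpTo n d l).ncard = ∑ i ∈ Icc 1 l, numHist n d i := by
  rw [depthHistogramsUpTo_eq_biUnion hn, ← finsum_mem_coe_finset]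
  exact (Icc 1 l).finite_toSet.ncard_biUnion
    (fun i _ => (finite_depthHistogramsUpTo n d i).subset
      (depthHistograms_subset_depthHistogramsUpTo n d i))
    ((pairwise_disjoint_depthHistograms n d).set_pairwise _)

section AddSingle

variable {d l m : ℕ} {D : ℕ → ℕ}

lemma sum_Icc_pred_add_single_of_le {i : ℕ} (hil : i ≤ l) :
    ∑ j ∈ Icc 1 (i - 1), (D + Pi.single l 1 : ℕ → ℕ) j = ∑ j ∈ Icc 1 (i - 1), D j := by
  have : l ∉ Icc 1 (i - 1) := by simp only [mem_Icc]; omega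
  simp [sum_add_distrib, this]

lemma sum_Icc_add_single (hl : 1 ≤ l) :
    ∑ j ∈ Icc 1 l, (D + Pi.single l 1 : ℕ → ℕ) j = ∑ j ∈ Icc 1 l, D j + 1 := by
  simp [sum_add_distrib, hl]

lemma vanishesOutside_add_single_iff (hl : l ≠ 0) :
    VanishesOutside l (D + Pi.single l 1) ↔ VanishesOutside l D :=
  forall_congr' fun j => imp_congr_right fun hj => by
    rw [Pi.add_apply, Pi.single_eq_of_ne (by omega), add_zero]

lemma DepthAdmissible.of_add_single (h : DepthAdmissible d (D + Pi.single l 1))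
    (hD : VanishesOutside l D) : DepthAdmissible d D := by
  intro i hi hpos
  rw [← sum_Icc_pred_add_single_of_le (hD.le_of_pos hpos)]
  exact h i hi (Nat.lt_of_lt_of_le hpos (Nat.le_add_right _ _))

lemma DepthAdmissible.add_single (h : DepthAdmissible d D) (hD : VanishesOutside l D)
    (hl : 2 ≤ l → 2 * l + d - 3 ≤ ∑ j ∈ Icc 1 (l - 1), D j) :
    DepthAdmissible d (D + Pi.single l 1) := by
  intro i hi hpos
  obtain rfl | hil := eq_or_ne i l
  · rw [sum_Icc_pred_add_single_of_le le_rfl]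
    exact hl hi
  · rw [Pi.add_apply, Pi.single_eq_of_ne hil, add_zero] at hpos
    rw [sum_Icc_pred_add_single_of_le (hD.le_of_pos hpos)]
    exact h i hi hpos

lemma add_single_mem_depthHistograms_iff (hl : 1 ≤ l) (hm : 2 * l + d - 3 ≤ m) :
    D + Pi.single l 1 ∈ depthHistograms (m + 1) d l ↔ D ∈ depthHistogramsUpTo m d l := by
  simp only [depthHistograms, depthHistogramsUpTo, Set.mem_ofPred_eq,
    vanishesOutside_add_single_iff (by omega : l ≠ 0), sum_Icc_add_single hl, add_left_inj]
  constructor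
  · rintro ⟨hD, -, hsum, hadm⟩
    exact ⟨hD, hsum, hadm.of_add_single hD⟩
  · rintro ⟨hD, hsum, hadm⟩
    refine ⟨hD, by simp, hsum, hadm.add_single hD fun h2 => ?_⟩
    rcases Nat.eq_zero_or_pos (D l) with h0 | hpos
    · rw [← (hD.pred h0).sum_Icc_eq (Nat.sub_le l 1), hsum]
      exact hm
    · exact hadm l h2 hpos

lemma depthHistograms_succ_eq_image (hl : 1 ≤ l) (hm : 2 * l + d - 3 ≤ m) :
    depthHistograms (m + 1) d l = (· + Pi.single l 1) '' depthHistogramsUpTo m d l := by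
  ext D
  constructor
  · intro hD
    have hle : Pi.single l 1 ≤ D := by
      intro j
      rcases eq_or_ne j l with rfl | hjl
      · simpa [Nat.one_le_iff_ne_zero, pos_iff_ne_zero] using hD.2.1
      · simp [Pi.single_eq_of_ne hjl]
    refine ⟨D - Pi.single l 1, ?_, tsub_add_cancel_of_le hle⟩
    rw [← add_single_mem_depthHistograms_iff hl hm, tsub_add_cancel_of_le hle]
    exact hD
  · rintro ⟨D, hD, rfl⟩
    exact (add_single_mem_depthHistograms_iff hl hm).2 hD

end AddSingle

theorem numHist_recurrence {n d l : ℕ} (hd : 2 ≤ d) (hl : 1 ≤ l)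
    (hn : 2 * l + d - 2 ≤ n) :
    numHist n d l = ∑ i ∈ Finset.Icc 1 l, numHist (n - 1) d i := by
  obtain ⟨m, rfl⟩ : ∃ m, n = m + 1 := ⟨n - 1, by omega⟩
  rw [numHist_eq_ncard, depthHistograms_succ_eq_image hl (by omega),
    Set.ncard_image_of_injective _ (add_left_injective _), Nat.add_sub_cancel,
    ncard_depthHistogramsUpTo (by omega)]
end

section
/- For any dimension d ≥ 2, any n ≥ d+1, and any l with 1 ≤ l ≤ (n-d+2)/2, the number D(n,d,l) of depth histograms of n points in R^d with deepest point of depth exactly l equals (n - 2l - d + 3)·(n + l - d - 1)! / ((l-1)!·(n - d + 1)!). -/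
open Finset

/-- Prefix-sum sequences: nondecreasing on `[1,m]`, with `2j+d-1 ≤ T j ≤ B`. -/
def PS (d m B : ℕ) : Set (ℕ → ℕ) :=
  {T | (∀ j, j = 0 ∨ m < j → T j = 0) ∧
       (∀ j k, 1 ≤ j → j ≤ k → k ≤ m → T j ≤ T k) ∧
       (∀ j, 1 ≤ j → j ≤ m → 2 * j + d - 1 ≤ T j ∧ T j ≤ B)}

lemma PS_finite (d m B : ℕ) : (PS d m B).Finite := by
  have h : Set.InjOn (fun (T : ℕ → ℕ) (j : Fin (m + 1)) =>
      (⟨min (T j) B, Nat.lt_succ_of_le (min_le_right _ _)⟩ : Fin (B + 1))) (PS d m B) := by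
    intro T hT T' hT' hEq
    funext j
    rcases hT with ⟨hz, _, hb⟩
    rcases hT' with ⟨hz', _, hb'⟩
    by_cases hj0 : j = 0
    · rw [hz j (Or.inl hj0), hz' j (Or.inl hj0)]
    by_cases hjm : j ≤ m
    · have h1 : 1 ≤ j := Nat.one_le_iff_ne_zero.mpr hj0
      have e := congrFun hEq ⟨j, Nat.lt_succ_of_le hjm⟩
      have := congrArg Fin.val e
      simp only [min_eq_left (hb j h1 hjm).2, min_eq_left (hb' j h1 hjm).2] at this
      exact this
    · rw [hz j (Or.inr (by omega)), hz' j (Or.inr (by omega))]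
  exact Set.Finite.of_finite_image (Set.toFinite _) h

lemma PS_zero (d B : ℕ) : PS d 0 B = {fun _ => 0} := by
  ext T
  constructor
  · rintro ⟨hz, -, -⟩
    funext j
    exact hz j (by omega)
  · rintro rfl
    exact ⟨fun _ _ => rfl, fun _ _ _ _ _ => le_rfl, fun j h1 h0 => by omega⟩

lemma PS_empty (d m B : ℕ) (hm : 1 ≤ m) (hB : B + 1 ≤ 2 * m + d - 1) : PS d m B = ∅ := by
  ext T
  simp only [Set.mem_empty_iff_false, iff_false]
  rintro ⟨-, -, hb⟩
  have := hb m hm le_rfl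
  omega

lemma PS_rec (d m B : ℕ) (hd : 2 ≤ d) (hm : 1 ≤ m) (hB : 2 * m + d - 1 ≤ B) :
    (PS d m B).ncard = (PS d m (B - 1)).ncard + (PS d (m - 1) B).ncard := by
  have hB1 : 1 ≤ B := by omega
  set C : Set (ℕ → ℕ) := {T ∈ PS d m B | T m = B} with hC
  -- decomposition
  have hsplit : PS d m B = PS d m (B - 1) ∪ C := by
    ext T
    constructor
    · intro hT
      obtain ⟨hz, hmono, hb⟩ := hT
      by_cases hTm : T m = B
      · exact Or.inr ⟨⟨hz, hmono, hb⟩, hTm⟩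
      · left
        refine ⟨hz, hmono, fun j h1 hjm => ?_⟩
        have h1' := hb j h1 hjm
        have h2 := hmono j m h1 hjm le_rfl
        have h3 := (hb m hm le_rfl).2
        exact ⟨h1'.1, by omega⟩
    · rintro (⟨hz, hmono, hb⟩ | ⟨hT, -⟩)
      · exact ⟨hz, hmono, fun j h1 hjm => ⟨(hb j h1 hjm).1, by have := (hb j h1 hjm).2; omega⟩⟩
      · exact hT
  have hdisj : Disjoint (PS d m (B - 1)) C := by
    rw [Set.disjoint_left]
    rintro T ⟨-, -, hb⟩ ⟨-, hTm⟩
    have := (hb m hm le_rfl).2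
    omega
  have hCfin : C.Finite := (PS_finite d m B).subset (fun T hT => hT.1)
  have hcard : (PS d m B).ncard = (PS d m (B - 1)).ncard + C.ncard := by
    rw [hsplit, Set.ncard_union_eq hdisj (PS_finite _ _ _) hCfin]
  rw [hcard]
  congr 1
  -- C is the image of PS d (m-1) B under updating at m to B
  have himg : C = (fun T => Function.update T m B) '' PS d (m - 1) B := by
    ext T
    constructor
    · rintro ⟨⟨hz, hmono, hb⟩, hTm⟩
      refine ⟨Function.update T m 0, ⟨?_, ?_, ?_⟩, ?_⟩
      · intro j hj
        by_cases hjm : j = m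
        · rw [hjm, Function.update_self]
        · rw [Function.update_of_ne hjm]
          exact hz j (by omega)
      · intro j k h1 hjk hkm
        rw [Function.update_of_ne (by omega), Function.update_of_ne (by omega)]
        exact hmono j k h1 hjk (by omega)
      · intro j h1 hjm
        rw [Function.update_of_ne (by omega)]
        exact hb j h1 (by omega)
      · show Function.update (Function.update T m 0) m B = T
        funext j
        by_cases hjm : j = m
        · rw [hjm, Function.update_self, hTm]
        · rw [Function.update_of_ne hjm, Function.update_of_ne hjm]
    · rintro ⟨T', ⟨hz, hmono, hb⟩, rfl⟩
      have hupd : ∀ j, j ≠ m → Function.update T' m B j = T' j := fun j hj =>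
        Function.update_of_ne hj _ _
      have hupdm : Function.update T' m B m = B := Function.update_self _ _ _
      have hle : ∀ j, Function.update T' m B j ≤ B := by
        intro j
        by_cases hjm : j = m
        · rw [hjm, hupdm]
        · rw [hupd j hjm]
          by_cases hj1 : 1 ≤ j ∧ j ≤ m - 1
          · exact (hb j hj1.1 hj1.2).2
          · rw [hz j (by omega)]; omega
      refine ⟨⟨?_, ?_, ?_⟩, hupdm⟩
      · intro j hj
        show Function.update T' m B j = 0
        rw [hupd j (by omega)]
        exact hz j (by omega)
      · intro j k h1 hjk hkm
        show Function.update T' m B j ≤ Function.update T' m B k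
        by_cases hkm' : k = m
        · rw [hkm', hupdm]
          exact hle j
        · rw [hupd j (by omega), hupd k hkm']
          exact hmono j k h1 hjk (by omega)
      · intro j h1 hjm
        show 2 * j + d - 1 ≤ Function.update T' m B j ∧ Function.update T' m B j ≤ B
        refine ⟨?_, hle j⟩
        by_cases hjm' : j = m
        · rw [hjm', hupdm]
          omega
        · rw [hupd j hjm']
          have := (hb j h1 (by omega)).1
          omega
  rw [himg]
  apply Set.ncard_image_of_injOn
  intro T hT T' hT' hEq
  funext j
  by_cases hjm : j = m
  · rw [hjm, hT.1 m (by omega), hT'.1 m (by omega)]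
  · have h2 : Function.update T m B j = Function.update T' m B j := congrFun hEq j
    rwa [Function.update_of_ne hjm, Function.update_of_ne hjm] at h2

lemma PS_card (d : ℕ) (hd : 2 ≤ d) :
    ∀ N m k, m + k ≤ N → 2 * m + 1 ≤ k →
    ((PS d m (k + d - 2)).ncard : ℚ) =
      ((k - 2 * m : ℕ) : ℚ) * (Nat.factorial (k + m - 1)) /
        (Nat.factorial m * Nat.factorial k) := by
  intro N
  induction N with
  | zero => intro m k h1 h2; omega
  | succ N IH =>
    intro m k hN hk
    match m with
    | 0 =>
      obtain ⟨k', rfl⟩ : ∃ k', k = k' + 1 := ⟨k - 1, by omega⟩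
      rw [PS_zero, Set.ncard_singleton]
      rw [show k' + 1 + 0 - 1 = k' from by omega, show k' + 1 - 2 * 0 = k' + 1 from by omega,
        Nat.factorial_zero, Nat.factorial_succ]
      push_cast
      have : ((k' : ℚ) + 1) ≠ 0 := by positivity
      have hf : (Nat.factorial k' : ℚ) ≠ 0 := Nat.cast_ne_zero.mpr (Nat.factorial_ne_zero _)
      field_simp
    | a + 1 =>
      obtain ⟨k', rfl⟩ : ∃ k', k = k' + 1 := ⟨k - 1, by omega⟩
      have hk' : 2 * a + 2 ≤ k' := by omega
      have hB : 2 * (a + 1) + d - 1 ≤ (k' + 1) + d - 2 := by omega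
      rw [PS_rec d (a + 1) ((k' + 1) + d - 2) hd (by omega) hB]
      rw [show (k' + 1) + d - 2 - 1 = k' + d - 2 from by omega]
      rw [show a + 1 - 1 = a from rfl]
      have t1 : ((PS d (a + 1) (k' + d - 2)).ncard : ℚ) =
          ((k' - 2 * (a + 1) : ℕ) : ℚ) * (Nat.factorial (k' + (a + 1) - 1)) /
            (Nat.factorial (a + 1) * Nat.factorial k') := by
        by_cases hk1 : 2 * (a + 1) + 1 ≤ k'
        · exact IH (a + 1) k' (by omega) hk1
        · rw [PS_empty d (a + 1) (k' + d - 2) (by omega) (by omega)]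
          rw [show k' - 2 * (a + 1) = 0 from by omega]
          simp
      have t2 : ((PS d a ((k' + 1) + d - 2)).ncard : ℚ) =
          (((k' + 1) - 2 * a : ℕ) : ℚ) * (Nat.factorial ((k' + 1) + a - 1)) /
            (Nat.factorial a * Nat.factorial (k' + 1)) := IH a (k' + 1) (by omega) (by omega)
      rw [show (((PS d (a+1) (k'+d-2)).ncard + (PS d a (k'+1+d-2)).ncard : ℕ) : ℚ)
            = ((PS d (a+1) (k'+d-2)).ncard : ℚ) + ((PS d a (k'+1+d-2)).ncard : ℚ) from by push_cast; ring,
        t1, t2]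
      rw [show k' + (a + 1) - 1 = k' + a from by omega,
        show (k' + 1) + a - 1 = k' + a from by omega,
        show (k' + 1) + (a + 1) - 1 = k' + a + 1 from by omega,
        show (k' - 2 * (a + 1) : ℕ) = k' - (2 * a + 2) from by omega,
        show ((k' + 1) - 2 * a : ℕ) = (k' + 1) - 2 * a from rfl,
        show ((k' + 1) - 2 * (a + 1) : ℕ) = (k' + 1) - (2 * a + 2) from by omega]
      rw [Nat.cast_sub (by omega : 2 * a + 2 ≤ k'), Nat.cast_sub (by omega : 2 * a ≤ k' + 1),
        Nat.cast_sub (by omega : 2 * a + 2 ≤ k' + 1)]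
      rw [show Nat.factorial (k' + a + 1) = (k' + a + 1) * Nat.factorial (k' + a) from
            Nat.factorial_succ _,
        Nat.factorial_succ a, Nat.factorial_succ k']
      have hf1 : (Nat.factorial (k' + a) : ℚ) ≠ 0 := Nat.cast_ne_zero.mpr (Nat.factorial_ne_zero _)
      have hf2 : (Nat.factorial a : ℚ) ≠ 0 := Nat.cast_ne_zero.mpr (Nat.factorial_ne_zero _)
      have hf3 : (Nat.factorial k' : ℚ) ≠ 0 := Nat.cast_ne_zero.mpr (Nat.factorial_ne_zero _)
      have ha0 : ((a : ℚ) + 1) ≠ 0 := by positivity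
      have hk0 : ((k' : ℚ) + 1) ≠ 0 := by positivity
      push_cast
      field_simp
      ring

lemma Dset_card_eq (n d l : ℕ) (hd : 2 ≤ d) (hn : d + 1 ≤ n) (hl : 1 ≤ l) :
    {D : ℕ → ℕ |
      (∀ j, j = 0 ∨ l < j → D j = 0) ∧ 0 < D l ∧
      (∑ j ∈ Finset.Icc 1 l, D j) = n ∧
      ∀ i, 2 ≤ i → 0 < D i → 2 * i + d - 3 ≤ ∑ j ∈ Finset.Icc 1 (i - 1), D j}.ncard
    = (PS d (l - 1) (n - 1)).ncard := by
  set Dset : Set (ℕ → ℕ) := {D : ℕ → ℕ |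
      (∀ j, j = 0 ∨ l < j → D j = 0) ∧ 0 < D l ∧
      (∑ j ∈ Finset.Icc 1 l, D j) = n ∧
      ∀ i, 2 ≤ i → 0 < D i → 2 * i + d - 3 ≤ ∑ j ∈ Finset.Icc 1 (i - 1), D j} with hDset
  set Φ : (ℕ → ℕ) → (ℕ → ℕ) :=
    fun D j => if 1 ≤ j ∧ j ≤ l - 1 then ∑ i ∈ Finset.Icc 1 j, D i else 0 with hΦ
  -- splitting the top of the sum
  have hsplitl : ∀ D : ℕ → ℕ, (∑ j ∈ Finset.Icc 1 l, D j)
      = (∑ j ∈ Finset.Icc 1 (l - 1), D j) + D l := by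
    intro D
    conv_lhs => rw [show l = l - 1 + 1 from by omega]
    rw [Finset.sum_Icc_succ_top (by omega), show l - 1 + 1 = l from by omega]
  -- key lower bound on prefix sums for D ∈ Dset
  have key : ∀ D ∈ Dset, ∀ t j, 1 ≤ j → j + t + 1 = l →
      2 * j + d - 1 ≤ ∑ i ∈ Finset.Icc 1 j, D i := by
    intro D hD t
    obtain ⟨hz, hpos, hsum, hcons⟩ := hD
    induction t with
    | zero =>
      intro j h1 hjl
      have hcl := hcons l (by omega) hpos
      rw [show l - 1 = j from by omega] at hcl
      omega
    | succ t ih =>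
      intro j h1 hjl
      by_cases hDj : 0 < D (j + 1)
      · have := hcons (j + 1) (by omega) hDj
        rw [show j + 1 - 1 = j from rfl] at this
        omega
      · have ihh := ih (j + 1) (by omega) (by omega)
        rw [Finset.sum_Icc_succ_top (by omega)] at ihh
        omega
  -- prefix sums equal on [0, l-1] implies equal everywhere
  have hinj : Set.InjOn Φ Dset := by
    intro D hD D' hD' hEq
    obtain ⟨hz, hpos, hsum, hcons⟩ := hD
    obtain ⟨hz', hpos', hsum', hcons'⟩ := hD'
    have hpre : ∀ j, j ≤ l - 1 → (∑ i ∈ Finset.Icc 1 j, D i) = ∑ i ∈ Finset.Icc 1 j, D' i := by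
      intro j hj
      rcases Nat.eq_zero_or_pos j with h0 | h0
      · rw [h0, Finset.Icc_eq_empty (by omega)]
        simp
      · have e := congrFun hEq j
        simp only [hΦ, if_pos (⟨h0, hj⟩ : 1 ≤ j ∧ j ≤ l - 1)] at e
        exact e
    funext i
    by_cases hi0 : i = 0 ∨ l < i
    · rw [hz i hi0, hz' i hi0]
    · by_cases hil : i ≤ l - 1
      · have h1 : 1 ≤ i := by omega
        have e := hpre i hil
        have e' := hpre (i - 1) (by omega)
        rw [show i = i - 1 + 1 from by omega, Finset.sum_Icc_succ_top (by omega),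
          Finset.sum_Icc_succ_top (by omega), show i - 1 + 1 = i from by omega] at e
        omega
      · have hi : i = l := by omega
        subst hi
        have e' := hpre (i - 1) (by omega)
        rw [hsplitl D] at hsum
        rw [hsplitl D'] at hsum'
        omega
  have himg : Φ '' Dset = PS d (l - 1) (n - 1) := by
    apply Set.Subset.antisymm
    · rintro _ ⟨D, hD, rfl⟩
      obtain ⟨hz, hpos, hsum, hcons⟩ := hD
      have hub : ∀ j, j ≤ l - 1 → (∑ i ∈ Finset.Icc 1 j, D i) + 1 ≤ n := by
        intro j hj
        have hmono : (∑ i ∈ Finset.Icc 1 j, D i) ≤ ∑ i ∈ Finset.Icc 1 (l - 1), D i :=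
          Finset.sum_le_sum_of_subset (Finset.Icc_subset_Icc le_rfl hj)
        rw [hsplitl D] at hsum
        omega
      refine ⟨?_, ?_, ?_⟩
      · intro j hj
        simp only [hΦ]
        rw [if_neg (by omega)]
      · intro j k h1 hjk hkm
        simp only [hΦ]
        rw [if_pos ⟨h1, by omega⟩, if_pos ⟨by omega, hkm⟩]
        exact Finset.sum_le_sum_of_subset (Finset.Icc_subset_Icc le_rfl hjk)
      · intro j h1 hjm
        simp only [hΦ]
        rw [if_pos ⟨h1, hjm⟩]
        constructor
        · exact key D ⟨hz, hpos, hsum, hcons⟩ (l - 1 - j) j h1 (by omega)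
        · have := hub j hjm
          omega
    · rintro T ⟨hz, hmono, hb⟩
      set D : ℕ → ℕ := fun i =>
        if 2 ≤ i ∧ i ≤ l - 1 then T i - T (i - 1)
        else if i = l then n - T (l - 1)
        else if i = 1 then T 1 else 0 with hDdef
      have hT0 : T 0 = 0 := hz 0 (Or.inl rfl)
      have hDl : D l = n - T (l - 1) := by
        simp only [hDdef]
        rcases Nat.lt_or_ge l 2 with h | h
        · rw [if_neg (by omega)]; simp
        · rw [if_neg (by omega)]; simp
      have hDzero : ∀ i, i = 0 ∨ l < i → D i = 0 := by
        intro i hi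
        simp only [hDdef]
        rw [if_neg (by omega), if_neg (by omega), if_neg (by omega)]
      have htl : T (l - 1) + 1 ≤ n := by
        rcases Nat.lt_or_ge l 2 with h | h
        · have : l - 1 = 0 := by omega
          rw [this, hT0]; omega
        · have := (hb (l - 1) (by omega) le_rfl).2
          omega
      have hpre : ∀ j, j ≤ l - 1 → (∑ i ∈ Finset.Icc 1 j, D i) = T j := by
        intro j
        induction j with
        | zero => intro _; rw [Finset.Icc_eq_empty (by omega), Finset.sum_empty, hT0]
        | succ j ihj =>
          intro hjl
          rw [Finset.sum_Icc_succ_top (by omega), ihj (by omega)]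
          rcases Nat.eq_zero_or_pos j with h0 | h0
          · subst h0
            have hD1 : D 1 = T 1 := by
              simp only [hDdef]
              rw [if_neg (by omega), if_neg (by omega)]; simp
            rw [hD1, hT0]
            norm_num
          · have hDj : D (j + 1) = T (j + 1) - T j := by
              simp only [hDdef]
              rw [if_pos ⟨by omega, hjl⟩]
              rfl
            have := hmono j (j + 1) h0 (by omega) hjl
            rw [hDj]
            omega
      have hsum : (∑ j ∈ Finset.Icc 1 l, D j) = n := by
        conv_lhs => rw [show l = l - 1 + 1 from by omega]
        rw [Finset.sum_Icc_succ_top (by omega), show l - 1 + 1 = l from by omega,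
          hpre (l - 1) le_rfl, hDl]
        omega
      refine ⟨D, ⟨hDzero, ?_, hsum, ?_⟩, ?_⟩
      · rw [hDl]; omega
      · intro i h2 hDi
        by_cases hil : i ≤ l
        · have h1 : 1 ≤ i - 1 := by omega
          have hbnd := (hb (i - 1) h1 (by omega)).1
          rw [hpre (i - 1) (by omega)]
          omega
        · rw [hDzero i (by omega)] at hDi
          omega
      · funext j
        simp only [hΦ]
        by_cases hj : 1 ≤ j ∧ j ≤ l - 1
        · rw [if_pos hj, hpre j hj.2]
        · rw [if_neg hj, hz j (by omega)]
  rw [← himg, Set.ncard_image_of_injOn hinj]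

theorem numHist_formula {n d l : ℕ} (hd : 2 ≤ d) (hn : d + 1 ≤ n) (hl : 1 ≤ l)
    (hln : 2 * l + d ≤ n + 2) :
    (numHist n d l : ℚ) =
      ((n - (2 * l + d - 2) + 1 : ℕ) * Nat.factorial (n + l - d - 1)) /
        (Nat.factorial (l - 1) * Nat.factorial (n - d + 1)) := by
  have h1 : numHist n d l = (PS d (l - 1) (n - 1)).ncard := Dset_card_eq n d l hd hn hl
  rw [h1]
  have h2 := PS_card d hd ((l - 1) + (n - d + 1)) (l - 1) (n - d + 1) le_rfl (by omega)
  rw [show (n - d + 1) + d - 2 = n - 1 from by omega] at h2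
  rw [h2, show (n - d + 1) - 2 * (l - 1) = n - (2 * l + d - 2) + 1 from by omega,
    show (n - d + 1) + (l - 1) - 1 = n + l - d - 1 from by omega]
end
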